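/- arXiv:2506.10438 — 2 statements merged into one kernel-verified Lean document; each statement's English description precedes it below -/
import Mathlib

section
/- Let α > 0 and x ∈ (0,1), and define the rate function I_{α,x}^{L}(z) := α( z·log(z/x) + (1−z)·log((1−z)/(1−x)) ) for z ∈ [0,1] (with 0·log 0 := 0) and I_{α,x}^{L}(z) := +∞ otherwise. Then for every closed set F ⊂ ℝ, limsup_{n → ∞} (1/n)·log P(S_{α,x}^{(n)}/n ∈ F) ≤ −inf_{z ∈ F} I_{α,x}^{L}(z). -/
open MeasureTheory Filter

noncomputable def gbinom (w z : ℝ) : ℝ :=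
  Real.Gamma (w + 1) / (Real.Gamma (z + 1) * Real.Gamma (w - z + 1))

noncomputable def fracZ (α x : ℝ) (n : ℕ) : ℝ :=
  α * ∑ j ∈ Finset.range (n + 1),
    gbinom (α * n) (α * j) * x ^ (α * (j : ℝ)) * (1 - x) ^ (α * ((n : ℝ) - (j : ℝ)))

noncomputable def fracW (α x : ℝ) (n j : ℕ) : ℝ :=
  (α / fracZ α x n) * gbinom (α * n) (α * j) * x ^ (α * (j : ℝ))
    * (1 - x) ^ (α * ((n : ℝ) - (j : ℝ)))

/-- The fractional binomial distribution `μ_{α,x}^{(n)}` as a measure on `ℝ`. -/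
noncomputable def fracMeasure (α x : ℝ) (n : ℕ) : Measure ℝ :=
  ∑ j ∈ Finset.range (n + 1), ENNReal.ofReal (fracW α x n j) • Measure.dirac (j : ℝ)

/-- The large deviation rate function `I_{α,x}^{(L)}`, with values in `EReal`
(`0 · log 0 = 0` holds automatically since `Real.log 0 = 0`). -/
noncomputable def rateL (α x : ℝ) (z : ℝ) : EReal :=
  if z ∈ Set.Icc (0 : ℝ) 1 then
    ((α * (z * Real.log (z / x) + (1 - z) * Real.log ((1 - z) / (1 - x))) : ℝ) : EReal)
  else ⊤

/-!
Since `Γ` is increasing on `[2, ∞)`, `(⌊s⌋₊ + 1)! ≤ Γ(s + 2) ≤ (⌊s⌋₊ + 2)!`, so Stirling's formula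
for factorials gives `log Γ(s + 1) = s log s - s + O(log (s + 2))` uniformly in `s ≥ 0`. In
`log binom(s, sp) + sp log x + s(1-p) log (1-x)` these main terms combine exactly to
`-s KL(Ber p ‖ Ber x)`, so the unnormalised weight of `j` is `exp (-n I(j/n) + O(log n))`. The
normalising constant is at least the weight at `j = ⌊xn⌋₊`, where `I(j/n) → 0`; summing the at most
`n + 1` weights with `j/n ∈ F` gives `P(S/n ∈ F) ≤ (n + 1) exp (-n inf_F I + o(n))`.
-/open Real Set
open scoped Nat Topology

lemma log_factorial_le (k : ℕ) : log k ! ≤ k * log k - k + log k / 2 + 1 := by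
  rcases k.eq_zero_or_pos with rfl | hk
  · simp
  obtain ⟨m, rfl⟩ := Nat.exists_eq_add_of_le' hk
  have hlog := log_le_log (Stirling.stirlingSeq'_pos m)
    (Stirling.stirlingSeq'_antitone (Nat.zero_le m))
  simp only [Function.comp_apply, Nat.succ_eq_add_one, zero_add] at hlog
  rw [Stirling.log_stirlingSeq_formula, Stirling.stirlingSeq_one,
    log_div (exp_pos 1).ne' (by positivity), log_exp, log_sqrt (by norm_num),
    log_div (by positivity) (exp_pos 1).ne', log_exp,
    log_mul (by norm_num) (by positivity)] at hlog
  linarith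

lemma le_log_factorial (k : ℕ) : k * log k - k ≤ log k ! := by
  rcases eq_or_ne k 0 with rfl | hk
  · simp
  have := Stirling.le_log_factorial_stirling hk
  have h1 : 0 ≤ log k := log_natCast_nonneg k
  have h2 : 0 ≤ log (2 * π) := log_nonneg (by linarith [pi_gt_three])
  linarith

lemma mul_log_le_mul_log {s t : ℝ} (hs : 0 ≤ s) (hst : s ≤ t) (ht : 1 ≤ t) :
    s * log s ≤ t * log t := by
  rcases hs.eq_or_lt with rfl | hs
  · simpa using mul_nonneg (by linarith) (log_nonneg ht)
  calc s * log s ≤ s * log t := mul_le_mul_of_nonneg_left (log_le_log hs hst) hs.le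
    _ ≤ t * log t := mul_le_mul_of_nonneg_right hst (log_nonneg ht)

lemma mul_log_add_le {s c : ℝ} (hs : 0 ≤ s) (hc : 0 < c) :
    s * log (s + c) ≤ s * log s + c := by
  rcases hs.eq_or_lt with rfl | hs
  · simpa using hc.le
  have h := log_le_sub_one_of_pos (show 0 < (s + c) / s by positivity)
  rw [log_div (by positivity) hs.ne'] at h
  have : s * ((s + c) / s - 1) = c := by field_simp; ring
  nlinarith

lemma log_Gamma_add_one_le {s : ℝ} (hs : 0 ≤ s) :
    log (Gamma (s + 1)) ≤ s * log s - s + 3 * log (s + 2) + 2 := by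
  set m := ⌊s⌋₊
  have hms : (m : ℝ) ≤ s := Nat.floor_le hs
  have hsm : s < m + 1 := Nat.lt_floor_add_one s
  have hshift : Gamma (s + 1) ≤ Gamma (s + 2) := by
    rw [show s + 2 = s + 1 + 1 by ring, Gamma_add_one (by linarith : (0 : ℝ) < s + 1).ne']
    exact le_mul_of_one_le_left (Gamma_pos_of_pos (by linarith)).le (by linarith)
  have hmono : Gamma (s + 2) ≤ (m + 2)! := by
    rw [← Gamma_nat_eq_factorial]
    exact Gamma_strictMonoOn_Ici.monotoneOn (by simp; linarith) (by simp; linarith)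
      (by push_cast; linarith)
  have hlog := (log_le_log (Gamma_pos_of_pos (by positivity)) (hshift.trans hmono)).trans
    (log_factorial_le (m + 2))
  push_cast at hlog
  have h1 := mul_log_le_mul_log (by positivity) (by linarith : (m : ℝ) + 2 ≤ s + 2)
    (by linarith)
  have h2 := log_le_log (by positivity) (by linarith : (m : ℝ) + 2 ≤ s + 2)
  have h3 := mul_log_add_le hs two_pos
  have h4 := log_nonneg (by linarith : (1 : ℝ) ≤ s + 2)
  nlinarith

lemma le_log_Gamma_add_one {s : ℝ} (hs : 0 ≤ s) :
    s * log s - s - 3 * log (s + 2) - 2 ≤ log (Gamma (s + 1)) := by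
  set m := ⌊s⌋₊
  have hms : (m : ℝ) ≤ s := Nat.floor_le hs
  have hsm : s < m + 1 := Nat.lt_floor_add_one s
  have hmono : ((m + 1)! : ℝ) ≤ Gamma (s + 2) := by
    rw [← Gamma_nat_eq_factorial]
    exact Gamma_strictMonoOn_Ici.monotoneOn (by simp; linarith) (by simp; linarith)
      (by push_cast; linarith)
  have hshift : log (Gamma (s + 2)) = log (s + 1) + log (Gamma (s + 1)) := by
    rw [show s + 2 = s + 1 + 1 by ring, Gamma_add_one (by linarith : (0 : ℝ) < s + 1).ne',
      log_mul (by linarith) (Gamma_pos_of_pos (by linarith)).ne']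
  have hlog := (le_log_factorial (m + 1)).trans (log_le_log (by positivity) hmono)
  push_cast at hlog
  have h1 := mul_log_le_mul_log hs hsm.le (by linarith)
  have h2 := log_le_log (by positivity) (by linarith : s + 1 ≤ s + 2)
  have h3 := log_nonneg (by linarith : (1 : ℝ) ≤ s + 2)
  linarith

lemma abs_log_Gamma_add_one_sub_le {s S : ℝ} (hs : 0 ≤ s) (hsS : s ≤ S) :
    |log (Gamma (s + 1)) - (s * log s - s)| ≤ 3 * log (S + 2) + 2 := by
  have hS := log_le_log (by linarith) (by linarith : s + 2 ≤ S + 2)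
  rw [abs_le]
  constructor <;> linarith [log_Gamma_add_one_le hs, le_log_Gamma_add_one hs]

lemma gbinom_pos {w z : ℝ} (hz : 0 ≤ z) (hzw : z ≤ w) : 0 < gbinom w z := by
  unfold gbinom
  have := Gamma_pos_of_pos (by linarith : 0 < w + 1)
  have := Gamma_pos_of_pos (by linarith : 0 < z + 1)
  have := Gamma_pos_of_pos (by linarith : 0 < w - z + 1)
  positivity

lemma log_gbinom {w z : ℝ} (hz : 0 ≤ z) (hzw : z ≤ w) :
    log (gbinom w z) =
      log (Gamma (w + 1)) - log (Gamma (z + 1)) - log (Gamma (w - z + 1)) := by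
  rw [gbinom, log_div (Gamma_pos_of_pos (by linarith)).ne',
    log_mul (Gamma_pos_of_pos (by linarith)).ne' (Gamma_pos_of_pos (by linarith)).ne', sub_sub]
  exact mul_ne_zero (Gamma_pos_of_pos (by linarith)).ne' (Gamma_pos_of_pos (by linarith)).ne'

/-- `KL(Ber p ‖ Ber x)`. -/
noncomputable def bernoulliKL (x p : ℝ) : ℝ :=
  p * log (p / x) + (1 - p) * log ((1 - p) / (1 - x))

lemma mul_log_mul_eq (t : ℝ) {c : ℝ} (hc : c ≠ 0) : t * log (t * c) = t * log t + t * log c := by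
  rcases eq_or_ne t 0 with rfl | ht
  · simp
  rw [log_mul ht hc, mul_add]

lemma mul_log_combination_eq_neg_mul_bernoulliKL {x : ℝ} (hx0 : 0 < x) (hx1 : x < 1) (s p : ℝ) :
    (s * log s - s) - (s * p * log (s * p) - s * p)
        - (s * (1 - p) * log (s * (1 - p)) - s * (1 - p))
        + s * p * log x + s * (1 - p) * log (1 - x) =
      -(s * bernoulliKL x p) := by
  rcases eq_or_ne s 0 with rfl | hs
  · simp
  have h1 : s * p * log (s * p) = s * (p * log p + p * log s) := by
    rw [← mul_log_mul_eq p hs, mul_comm p s, mul_assoc]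
  have h2 : s * (1 - p) * log (s * (1 - p)) = s * ((1 - p) * log (1 - p) + (1 - p) * log s) := by
    rw [← mul_log_mul_eq (1 - p) hs, mul_comm (1 - p) s, mul_assoc]
  have h3 : p * log (p / x) = p * log p - p * log x := by
    rw [div_eq_mul_inv, mul_log_mul_eq p (inv_ne_zero hx0.ne'), log_inv]; ring
  have h4 : (1 - p) * log ((1 - p) / (1 - x)) = (1 - p) * log (1 - p) - (1 - p) * log (1 - x) := by
    rw [div_eq_mul_inv, mul_log_mul_eq (1 - p) (inv_ne_zero (by linarith)), log_inv]; ring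
  rw [bernoulliKL, h1, h2, h3, h4]
  ring

lemma abs_log_gbinom_mul_rpow_mul_rpow_add_le {x s p : ℝ} (hx0 : 0 < x) (hx1 : x < 1)
    (hs : 0 ≤ s) (hp : p ∈ Icc (0 : ℝ) 1) :
    |log (gbinom s (s * p) * x ^ (s * p) * (1 - x) ^ (s * (1 - p))) + s * bernoulliKL x p|
      ≤ 3 * (3 * log (s + 2) + 2) := by
  have hsp : 0 ≤ s * p := mul_nonneg hs hp.1
  have hsq : 0 ≤ s * (1 - p) := mul_nonneg hs (by linarith [hp.2])
  have hsps : s * p ≤ s := by nlinarith [hp.2]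
  rw [log_mul (mul_pos (gbinom_pos hsp hsps) (rpow_pos_of_pos hx0 _)).ne'
      (rpow_pos_of_pos (by linarith) _).ne',
    log_mul (gbinom_pos hsp hsps).ne' (rpow_pos_of_pos hx0 _).ne', log_gbinom hsp hsps,
    log_rpow hx0, log_rpow (by linarith), show s - s * p = s * (1 - p) by ring]
  have hid := mul_log_combination_eq_neg_mul_bernoulliKL hx0 hx1 s p
  have e1 := abs_log_Gamma_add_one_sub_le hs le_rfl
  have e2 := abs_log_Gamma_add_one_sub_le hsp hsps
  have e3 := abs_log_Gamma_add_one_sub_le hsq (show s * (1 - p) ≤ s by nlinarith [hp.1])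
  rw [abs_le] at e1 e2 e3 ⊢
  constructor <;> linarith

noncomputable def fracTerm (α x : ℝ) (n j : ℕ) : ℝ :=
  gbinom (α * n) (α * j) * x ^ (α * (j : ℝ)) * (1 - x) ^ (α * ((n : ℝ) - (j : ℝ)))

lemma fracW_eq_div_mul (α x : ℝ) (n j : ℕ) :
    fracW α x n j = α / fracZ α x n * fracTerm α x n j := by
  rw [fracW, fracTerm]; ring

lemma natCast_div_mem_Icc {n j : ℕ} (hj : j ≤ n) : (j / n : ℝ) ∈ Icc (0 : ℝ) 1 :=
  ⟨by positivity, div_le_one_of_le₀ (by exact_mod_cast hj) n.cast_nonneg⟩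

lemma fracTerm_pos {α x : ℝ} (hα : 0 ≤ α) (hx0 : 0 < x) (hx1 : x < 1) {n j : ℕ} (hj : j ≤ n) :
    0 < fracTerm α x n j :=
  mul_pos (mul_pos (gbinom_pos (by positivity) (by gcongr))
    (rpow_pos_of_pos hx0 _)) (rpow_pos_of_pos (by linarith) _)

lemma abs_log_fracTerm_add_le {α x : ℝ} (hα : 0 ≤ α) (hx0 : 0 < x) (hx1 : x < 1) {n j : ℕ}
    (hj : j ≤ n) :
    |log (fracTerm α x n j) + n * (α * bernoulliKL x (j / n))|
      ≤ 3 * (3 * log (α * n + 2) + 2) := by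
  have hjn : α * n * (j / n : ℝ) = α * j := by
    rcases Nat.eq_zero_or_pos n with rfl | hn
    · simp [Nat.le_zero.1 hj]
    field_simp
  have h := abs_log_gbinom_mul_rpow_mul_rpow_add_le hx0 hx1 (by positivity : 0 ≤ α * n)
    (natCast_div_mem_Icc hj)
  rw [mul_one_sub, hjn, ← mul_sub] at h
  convert h using 3
  · rw [fracTerm]
  · ring

lemma fracW_le_exp {α x : ℝ} (hα : 0 < α) (hx0 : 0 < x) (hx1 : x < 1) {n i j : ℕ}
    (hi : i ≤ n) (hj : j ≤ n) :
    fracW α x n j ≤ exp (n * (α * bernoulliKL x (i / n)) - n * (α * bernoulliKL x (j / n))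
      + (18 * log (α * n + 2) + 12)) := by
  have hTi := fracTerm_pos hα.le hx0 hx1 hi
  have hTj := fracTerm_pos hα.le hx0 hx1 hj
  have hZ : α * fracTerm α x n i ≤ fracZ α x n :=
    mul_le_mul_of_nonneg_left (Finset.single_le_sum
      (fun k hk => (fracTerm_pos hα.le hx0 hx1 (Nat.lt_succ_iff.1 (Finset.mem_range.1 hk))).le)
      (Finset.mem_range.2 (Nat.lt_succ_of_le hi))) hα.le
  have hW : fracW α x n j ≤ fracTerm α x n j / fracTerm α x n i := by
    rw [fracW_eq_div_mul, div_mul_eq_mul_div,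
      div_le_div_iff₀ ((by positivity : 0 < α * fracTerm α x n i).trans_le hZ) hTi]
    nlinarith
  have ei := abs_le.1 (abs_log_fracTerm_add_le hα.le hx0 hx1 hi)
  have ej := abs_le.1 (abs_log_fracTerm_add_le hα.le hx0 hx1 hj)
  refine hW.trans ?_
  rw [← exp_log hTi, ← exp_log hTj, ← exp_sub]
  exact exp_le_exp.2 (by linarith [ei.1, ej.2])

lemma fracMeasure_le_of_forall_mem (α x : ℝ) (n : ℕ) {A : Set ℝ} {B : ℝ}
    (hB : ∀ j ≤ n, (j : ℝ) ∈ A → fracW α x n j ≤ B) :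
    fracMeasure α x n A ≤ ENNReal.ofReal ((n + 1) * B) := by
  have hcard : ENNReal.ofReal ((n + 1) * B) = ∑ _j ∈ Finset.range (n + 1), ENNReal.ofReal B := by
    rw [Finset.sum_const, Finset.card_range, nsmul_eq_mul, ENNReal.ofReal_mul (by positivity)]
    norm_cast
  rw [fracMeasure, Measure.finsetSum_apply, hcard]
  refine Finset.sum_le_sum fun j hj => ?_
  rw [Measure.smul_apply, Measure.dirac_apply, smul_eq_mul]
  by_cases hjA : (j : ℝ) ∈ A
  · rw [indicator_of_mem hjA, Pi.one_apply, mul_one]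
    exact ENNReal.ofReal_le_ofReal (hB j (Nat.lt_succ_iff.1 (Finset.mem_range.1 hj)) hjA)
  · simp [indicator_of_notMem hjA]

lemma rateL_of_mem_Icc (α x : ℝ) {z : ℝ} (hz : z ∈ Icc (0 : ℝ) 1) :
    rateL α x z = ((α * bernoulliKL x z : ℝ) : EReal) := by
  rw [rateL, if_pos hz, bernoulliKL]

lemma tendsto_bernoulliKL_floor_mul_div {x : ℝ} (hx0 : 0 < x) (hx1 : x < 1) :
    Tendsto (fun n : ℕ => bernoulliKL x (⌊x * n⌋₊ / n)) atTop (𝓝 0) := by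
  have hcont : ContinuousAt (bernoulliKL x) x := by
    unfold bernoulliKL
    fun_prop (disch := simp [hx0.ne', (sub_pos.2 hx1).ne'])
  have hself : bernoulliKL x x = 0 := by
    simp [bernoulliKL, hx0.ne', (sub_pos.2 hx1).ne']
  rw [← hself]
  exact hcont.tendsto.comp
    ((tendsto_nat_floor_mul_div_atTop hx0.le).comp tendsto_natCast_atTop_atTop)

lemma tendsto_log_mul_add_div_atTop {a : ℝ} (ha : 0 < a) (b : ℝ) :
    Tendsto (fun n : ℕ => log (a * n + b) / n) atTop (𝓝 0) := by
  have hf : Tendsto (fun n : ℕ => a * n + b) atTop atTop :=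
    tendsto_atTop_add_const_right _ b
      ((tendsto_natCast_atTop_atTop).const_mul_atTop ha)
  have hO : (fun n : ℕ => a * n + b) =O[atTop] (fun n : ℕ => (n : ℝ)) :=
    Asymptotics.IsBigO.of_bound (a + |b|) (by
      filter_upwards [eventually_ge_atTop 1] with n hn
      have : (1 : ℝ) ≤ n := by exact_mod_cast hn
      rw [Real.norm_natCast, Real.norm_eq_abs]
      calc |a * n + b| ≤ |a * n| + |b| := abs_add_le _ _
        _ ≤ (a + |b|) * n := by rw [abs_of_pos (by positivity)]; nlinarith [abs_nonneg b])
  exact ((isLittleO_log_id_atTop.comp_tendsto hf).trans_isBigO hO).tendsto_div_nhds_zero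

lemma coe_mul_log_le_of_le_ofReal {c B : ℝ} (hc : 0 ≤ c) (hB : 0 < B) {m : ENNReal}
    (hm : m ≤ ENNReal.ofReal B) :
    ((c : ℝ) : EReal) * ENNReal.log m ≤ ((c * log B : ℝ) : EReal) := by
  have h := ENNReal.log_monotone hm
  rw [ENNReal.log_ofReal_of_pos hB] at h
  rw [EReal.coe_mul]
  exact mul_le_mul_of_nonneg_left h (EReal.coe_nonneg.2 hc)

lemma fracMeasure_div_mem_le {α x : ℝ} (hα : 0 < α) (hx0 : 0 < x) (hx1 : x < 1) {F : Set ℝ}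
    {c : ℝ} (hc : ∀ z ∈ F, (c : EReal) ≤ rateL α x z) (n : ℕ) :
    fracMeasure α x n {y | y / n ∈ F} ≤ ENNReal.ofReal ((n + 1) *
      exp (n * (α * bernoulliKL x (⌊x * n⌋₊ / n) - c) + (18 * log (α * n + 2) + 12))) := by
  refine fracMeasure_le_of_forall_mem α x n fun j hj hjF => ?_
  have hcj : c ≤ α * bernoulliKL x (j / n) := by
    have := hc _ hjF
    rwa [rateL_of_mem_Icc α x (natCast_div_mem_Icc hj), EReal.coe_le_coe_iff] at this
  have hfloor : ⌊x * n⌋₊ ≤ n :=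
    Nat.floor_le_of_le (mul_le_of_le_one_left n.cast_nonneg hx1.le)
  refine (fracW_le_exp hα hx0 hx1 hfloor hj).trans (exp_le_exp.2 ?_)
  nlinarith [mul_le_mul_of_nonneg_left hcj n.cast_nonneg]

lemma limsup_fracMeasure_div_mem_le {α x : ℝ} (hα : 0 < α) (hx0 : 0 < x) (hx1 : x < 1)
    {F : Set ℝ} {c : ℝ} (hc : ∀ z ∈ F, (c : EReal) ≤ rateL α x z) :
    limsup (fun n : ℕ => (((n : ℝ)⁻¹ : ℝ) : EReal) *
      ENNReal.log (fracMeasure α x n {y | y / n ∈ F})) atTop ≤ -c := by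
  set v : ℕ → ℝ := fun n => (n : ℝ)⁻¹ * log ((n + 1) *
    exp (n * (α * bernoulliKL x (⌊x * n⌋₊ / n) - c) + (18 * log (α * n + 2) + 12)))
  have hv : Tendsto v atTop (𝓝 (-c)) := by
    have hlim := ((tendsto_log_mul_add_div_atTop one_pos 1).add
      (((tendsto_bernoulliKL_floor_mul_div hx0 hx1).const_mul α).sub_const c)).add
      (((tendsto_log_mul_add_div_atTop hα 2).const_mul 18).add
        (tendsto_inv_atTop_nhds_zero_nat.const_mul 12))
    simp only [mul_zero, zero_add, add_zero, zero_sub, one_mul] at hlim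
    refine hlim.congr' ?_
    filter_upwards [eventually_ne_atTop 0] with n hn
    simp only [v]
    rw [log_mul (by positivity) (exp_pos _).ne', log_exp]
    field_simp
    ring
  calc _ ≤ limsup (fun n => (v n : EReal)) atTop :=
        limsup_le_limsup (Eventually.of_forall fun n => coe_mul_log_le_of_le_ofReal
          (by positivity) (by positivity) (fracMeasure_div_mem_le hα hx0 hx1 hc n))
    _ = -c := (EReal.tendsto_coe.2 hv).limsup_eq

theorem fracBinom_ldp_upper_general (α x : ℝ) (hα : 0 < α) (hx : x ∈ Set.Ioo (0 : ℝ) 1)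
    (F : Set ℝ) :
    Filter.limsup (fun n : ℕ =>
        ((((n : ℝ)⁻¹ : ℝ) : EReal) *
          ENNReal.log (fracMeasure α x n {y : ℝ | y / (n : ℝ) ∈ F})))
      Filter.atTop ≤ -(⨅ z ∈ F, rateL α x z) := by
  rw [EReal.le_neg]
  refine EReal.ge_of_forall_gt_iff_ge.1 fun c hc => ?_
  rw [EReal.le_neg]
  exact limsup_fracMeasure_div_mem_le hα hx.1 hx.2 fun z hz => hc.le.trans (iInf₂_le z hz)

/-- LDP upper bound for `S_{α,x}^{(n)}/n` with speed `n` and rate function `I_{α,x}^{(L)}`: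
for any closed set `F`, `limsup (1/n) log P(S/n ∈ F) ≤ −inf_F I`. -/
theorem fracBinom_ldp_upper (α x : ℝ) (hα : 0 < α) (hx : x ∈ Set.Ioo (0 : ℝ) 1)
    (F : Set ℝ) (hF : IsClosed F) :
    Filter.limsup (fun n : ℕ =>
        ((((n : ℝ)⁻¹ : ℝ) : EReal) *
          ENNReal.log (fracMeasure α x n {y : ℝ | y / (n : ℝ) ∈ F})))
      Filter.atTop ≤ -(⨅ z ∈ F, rateL α x z) :=
  fracBinom_ldp_upper_general α x hα hx F
end

section
/- Let α > 0 and x ∈ (0,1). Then for every ξ ∈ ℝ, lim_{n → ∞} (1/n)·log( Σ_{j=0}^n e^{ξj}·μ_{α,x}^{(n)}({j}) ) = α·log(1 − x + x·e^{ξ/α}). -/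
/-!
With `y = x e^{ξ/α}` the moment generating function is the ratio `S(y, 1 - x) / S(x, 1 - x)` of
the unnormalised sums `S(y, b) = ∑ⱼ binom(αn, αj) y^{αj} b^{α(n-j)}`, so it suffices to show
`log S(y, b) = αn log (y + b) + O(log n)`. Crude Stirling bounds
`log Γ(s + 1) = s log s - s + O(log s)` reduce the log of each term to the weight
`s log s - a log a - c log c + a log y + c log b` (`a = αj`, `c = α(n - j)`, `s = a + c`) up to
`O(log n)`. The log-sum inequality bounds this weight by `s log (y + b)`, which gives the upper
bound since there are only `n + 1` terms; at `j = ⌊n y / (y + b)⌋` the same estimate read through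
`log u ≤ u - 1` shows that the weight falls short of `s log (y + b)` by `O(1)`, which gives the
lower bound.
-/

open MeasureTheory Filter

open Real Set

namespace Real

lemma rpow_self_mul_exp_neg_le_Gamma_add_one {s : ℝ} (hs : 0 ≤ s) :
    s ^ s * exp (-(s + 1)) ≤ Gamma (s + 1) := by
  have hint := GammaIntegral_convergent (show 0 < s + 1 by linarith)
  have hsub : Ioc s (s + 1) ⊆ Ioi 0 := fun x hx => hs.trans_lt hx.1
  rw [Gamma_eq_integral (by linarith)]
  calc s ^ s * exp (-(s + 1)) = ∫ _ in Ioc s (s + 1), s ^ s * exp (-(s + 1)) := by simp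
    _ ≤ ∫ x in Ioc s (s + 1), exp (-x) * x ^ (s + 1 - 1) := by
        refine setIntegral_mono_on (integrableOn_const measure_Ioc_lt_top.ne)
          (hint.mono_set hsub) measurableSet_Ioc fun x hx => ?_
        rw [add_sub_cancel_right, mul_comm]
        exact mul_le_mul (exp_le_exp.2 (by linarith [hx.2])) (rpow_le_rpow hs hx.1.le hs)
          (by positivity) (exp_pos _).le
    _ ≤ ∫ x in Ioi 0, exp (-x) * x ^ (s + 1 - 1) :=
        setIntegral_mono_set hint (ae_restrict_of_forall_mem measurableSet_Ioi fun x hx =>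
          mul_nonneg (exp_pos _).le (rpow_nonneg (le_of_lt hx) _)) hsub.eventuallyLE

lemma Gamma_add_one_le_rpow_mul_exp {s : ℝ} (hs : 1 ≤ s) :
    Gamma (s + 1) ≤ s ^ (s + 1) * exp (1 - s) := by
  have hs0 : 0 < s := by linarith
  set K := s ^ (s - 1) * exp (1 - s)
  have hmaj : ∫ x in Ioi 0, K * (x ^ ((2 : ℝ) - 1) * exp (-(s⁻¹ * x)))
      = s ^ (s + 1) * exp (1 - s) := by
    rw [integral_const_mul, integral_rpow_mul_exp_neg_mul_Ioi two_pos (inv_pos.2 hs0), one_div,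
      inv_inv, Gamma_two, mul_one, show s + 1 = (s - 1) + 2 by ring, rpow_add hs0, rpow_two]
    ring
  have hint : IntegrableOn (fun x => K * (x ^ ((2 : ℝ) - 1) * exp (-(s⁻¹ * x)))) (Ioi 0) :=
    Integrable.of_integral_ne_zero (by rw [hmaj]; positivity)
  rw [Gamma_eq_integral (by linarith), ← hmaj]
  refine setIntegral_mono_on (GammaIntegral_convergent (by linarith)) hint measurableSet_Ioi
    fun x (hx : 0 < x) => ?_
  -- `x ^ s e^{-x} ≤ s ^ (s - 1) e^{1 - s} x e^{-x / s}` reads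
  -- `(s - 1) log (x / s) ≤ (s - 1) (x / s - 1)`
  have hlog : (s - 1) * (log x - log s) ≤ x - x / s - s + 1 := by
    have h := mul_le_mul_of_nonneg_left (log_le_sub_one_of_pos (div_pos hx hs0))
      (sub_nonneg.2 hs)
    rw [log_div hx.ne' hs0.ne'] at h
    calc _ ≤ _ := h
      _ = x - x / s - s + 1 := by field_simp; ring
  rw [add_sub_cancel_right, show (2 : ℝ) - 1 = 1 by norm_num, rpow_one, rpow_def_of_pos hx]
  nth_rewrite 3 [← exp_log hx]
  simp only [K, rpow_def_of_pos hs0, ← exp_add]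
  refine exp_le_exp.2 ?_
  field_simp at hlog ⊢
  nlinarith [hlog]

lemma mul_log_sub_le_log_Gamma_add_one {s : ℝ} (hs : 0 ≤ s) :
    s * log s - s - 1 ≤ log (Gamma (s + 1)) := by
  rcases hs.eq_or_lt with rfl | hs
  · norm_num
  have h := log_le_log (by positivity) (rpow_self_mul_exp_neg_le_Gamma_add_one hs.le)
  rw [log_mul (by positivity) (by positivity), log_rpow hs, log_exp] at h
  linarith

lemma log_Gamma_add_one_le {s : ℝ} (hs : 1 ≤ s) :
    log (Gamma (s + 1)) ≤ s * log s - s + 1 + log s := by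
  have hs0 : 0 < s := by linarith
  have h := log_le_log (Gamma_pos_of_pos (by linarith)) (Gamma_add_one_le_rpow_mul_exp hs)
  rw [log_mul (by positivity) (by positivity), log_rpow hs0, log_exp] at h
  linarith

lemma sub_le_mul_log_sub_mul_log {a r : ℝ} (ha : 0 ≤ a) (hr : 0 < r) :
    a - r ≤ a * log a - a * log r := by
  rcases ha.eq_or_lt with rfl | ha
  · simpa using hr.le
  have h := mul_le_mul_of_nonneg_left (one_sub_inv_le_log_of_pos (div_pos ha hr)) ha.le
  rw [log_div ha.ne' hr.ne', inv_div, mul_sub, mul_one, mul_div_cancel₀ _ ha.ne'] at h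
  linarith

lemma mul_log_sub_mul_log_le {a r : ℝ} (ha : 0 ≤ a) (hr : 0 < r) :
    a * log a - a * log r ≤ a * (a - r) / r := by
  rcases ha.eq_or_lt with rfl | ha
  · simp
  have h := mul_le_mul_of_nonneg_left (log_le_sub_one_of_pos (div_pos ha hr)) ha.le
  rw [log_div ha.ne' hr.ne'] at h
  calc _ = a * (log a - log r) := by ring
    _ ≤ _ := h
    _ = a * (a - r) / r := by field_simp

end Real

/-- Stirling's approximation of `log (binom(a + c, a) y ^ a b ^ c)`. -/
noncomputable def stirlingLogWeight (y b a c : ℝ) : ℝ :=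
  (a + c) * log (a + c) - a * log a - c * log c + a * log y + c * log b

section StirlingLogWeight

variable {y b a c : ℝ}

lemma stirlingLogWeight_eq (hy : 0 < y) (hb : 0 < b) (hac : 0 < a + c) :
    stirlingLogWeight y b a c = (a + c) * log (y + b)
      - ((a * log a - a * log ((a + c) * y / (y + b)))
        + (c * log c - c * log ((a + c) * b / (y + b)))) := by
  rw [stirlingLogWeight, log_div (by positivity) (by positivity),
    log_div (by positivity) (by positivity), log_mul hac.ne' hy.ne', log_mul hac.ne' hb.ne']
  ring

lemma stirlingLogWeight_le (hy : 0 < y) (hb : 0 < b) (ha : 0 ≤ a) (hc : 0 ≤ c)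
    (hac : 0 < a + c) : stirlingLogWeight y b a c ≤ (a + c) * log (y + b) := by
  have h₁ := sub_le_mul_log_sub_mul_log ha (show 0 < (a + c) * y / (y + b) by positivity)
  have h₂ := sub_le_mul_log_sub_mul_log hc (show 0 < (a + c) * b / (y + b) by positivity)
  have hsum : (a - (a + c) * y / (y + b)) + (c - (a + c) * b / (y + b)) = 0 := by
    field_simp; ring
  rw [stirlingLogWeight_eq hy hb hac]
  linarith

lemma le_stirlingLogWeight (hy : 0 < y) (hb : 0 < b) (ha : 0 ≤ a) (hc : 0 ≤ c)
    (hac : 0 < a + c) :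
    (a + c) * log (y + b) - (a * b - c * y) ^ 2 / ((a + c) * y * b)
      ≤ stirlingLogWeight y b a c := by
  have h₁ := mul_log_sub_mul_log_le ha (show 0 < (a + c) * y / (y + b) by positivity)
  have h₂ := mul_log_sub_mul_log_le hc (show 0 < (a + c) * b / (y + b) by positivity)
  have hsum : a * (a - (a + c) * y / (y + b)) / ((a + c) * y / (y + b))
      + c * (c - (a + c) * b / (y + b)) / ((a + c) * b / (y + b))
      = (a * b - c * y) ^ 2 / ((a + c) * y * b) := by
    field_simp; ring
  rw [stirlingLogWeight_eq hy hb hac]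
  linarith

end StirlingLogWeight

noncomputable def fracBinomTerm (y b s a : ℝ) : ℝ :=
  gbinom s a * y ^ a * b ^ (s - a)

section FracBinomTerm

variable {y b s a : ℝ}

lemma fracBinomTerm_pos (hy : 0 < y) (hb : 0 < b) (ha : 0 ≤ a) (has : a ≤ s) :
    0 < fracBinomTerm y b s a := by
  have : 0 < Gamma (s - a + 1) := Gamma_pos_of_pos (by linarith)
  have : 0 < Gamma (a + 1) := Gamma_pos_of_pos (by linarith)
  have : 0 < Gamma (s + 1) := Gamma_pos_of_pos (by linarith)
  unfold fracBinomTerm gbinom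
  positivity

lemma log_fracBinomTerm (hy : 0 < y) (hb : 0 < b) (ha : 0 ≤ a) (has : a ≤ s) :
    log (fracBinomTerm y b s a) = log (Gamma (s + 1)) - log (Gamma (a + 1))
      - log (Gamma (s - a + 1)) + a * log y + (s - a) * log b := by
  have : 0 < Gamma (s - a + 1) := Gamma_pos_of_pos (by linarith)
  have : 0 < Gamma (a + 1) := Gamma_pos_of_pos (by linarith)
  have : 0 < Gamma (s + 1) := Gamma_pos_of_pos (by linarith)
  rw [fracBinomTerm, gbinom, log_mul (by positivity) (by positivity),
    log_mul (by positivity) (by positivity), log_div (by positivity) (by positivity),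
    log_mul (by positivity) (by positivity), log_rpow hy, log_rpow hb]
  ring

lemma log_fracBinomTerm_le (hy : 0 < y) (hb : 0 < b) (hs : 1 ≤ s) (ha : 0 ≤ a) (has : a ≤ s) :
    log (fracBinomTerm y b s a) ≤ s * log (y + b) + 3 + log s := by
  have hweight := stirlingLogWeight_le hy hb ha (sub_nonneg.2 has) (by linarith)
  rw [add_sub_cancel, stirlingLogWeight, add_sub_cancel] at hweight
  rw [log_fracBinomTerm hy hb ha has]
  linarith [log_Gamma_add_one_le hs, mul_log_sub_le_log_Gamma_add_one ha,
    mul_log_sub_le_log_Gamma_add_one (sub_nonneg.2 has)]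

lemma le_log_fracBinomTerm (hy : 0 < y) (hb : 0 < b) (ha : 1 ≤ a) (has : 1 ≤ s - a) :
    s * log (y + b) - (a * b - (s - a) * y) ^ 2 / (s * y * b) - 3 - log a - log (s - a)
      ≤ log (fracBinomTerm y b s a) := by
  have hweight := le_stirlingLogWeight hy hb (by linarith) (by linarith) (by linarith)
    (a := a) (c := s - a)
  rw [add_sub_cancel, stirlingLogWeight, add_sub_cancel] at hweight
  rw [log_fracBinomTerm hy hb (by linarith) (by linarith)]
  linarith [mul_log_sub_le_log_Gamma_add_one (show 0 ≤ s by linarith), log_Gamma_add_one_le ha,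
    log_Gamma_add_one_le has]

end FracBinomTerm

noncomputable def fracBinomSum (α y b : ℝ) (n : ℕ) : ℝ :=
  ∑ j ∈ Finset.range (n + 1), fracBinomTerm y b (α * n) (α * j)

section FracBinomSum

variable {α y b : ℝ}

lemma fracBinomTerm_mem_range_pos (hα : 0 < α) (hy : 0 < y) (hb : 0 < b) {n j : ℕ}
    (hj : j ∈ Finset.range (n + 1)) : 0 < fracBinomTerm y b (α * n) (α * j) := by
  have hjn : (j : ℝ) ≤ n := by exact_mod_cast Nat.lt_succ_iff.1 (Finset.mem_range.1 hj)
  exact fracBinomTerm_pos hy hb (by positivity) (by gcongr)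

lemma fracBinomSum_pos (hα : 0 < α) (hy : 0 < y) (hb : 0 < b) (n : ℕ) :
    0 < fracBinomSum α y b n :=
  Finset.sum_pos (fun _ hj => fracBinomTerm_mem_range_pos hα hy hb hj) Finset.nonempty_range_add_one

lemma log_fracBinomSum_le (hα : 0 < α) (hy : 0 < y) (hb : 0 < b) {n : ℕ} (hn : 1 ≤ α * n) :
    log (fracBinomSum α y b n) ≤ α * n * log (y + b) + 3 + log (α * n) + log (n + 1) := by
  have hterm : ∀ j ∈ Finset.range (n + 1), fracBinomTerm y b (α * n) (α * j)
      ≤ exp (α * n * log (y + b) + 3 + log (α * n)) := fun j hj => by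
    have hjn : (j : ℝ) ≤ n := by exact_mod_cast Nat.lt_succ_iff.1 (Finset.mem_range.1 hj)
    rw [← exp_log (fracBinomTerm_mem_range_pos hα hy hb hj)]
    exact exp_le_exp.2 (log_fracBinomTerm_le hy hb hn (by positivity) (by gcongr))
  have hsum := Finset.sum_le_card_nsmul _ _ _ hterm
  rw [Finset.card_range, nsmul_eq_mul] at hsum
  have h := log_le_log (fracBinomSum_pos hα hy hb n) hsum
  rw [log_mul (by positivity) (exp_pos _).ne', log_exp] at h
  push_cast at h
  linarith

lemma exists_le_log_fracBinomSum (hα : 0 < α) (hy : 0 < y) (hb : 0 < b) :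
    ∃ C, ∀ᶠ n : ℕ in atTop,
      α * n * log (y + b) - C - 2 * log (α * n) ≤ log (fracBinomSum α y b n) := by
  set p := y / (y + b) with hp
  have hp0 : 0 < p := by positivity
  have hp1 : p < 1 := (div_lt_one (by positivity)).2 (by linarith)
  refine ⟨α * (y + b) ^ 2 / (y * b) + 3, ?_⟩
  have hn := tendsto_natCast_atTop_atTop (R := ℝ)
  filter_upwards [hn.eventually_ge_atTop ((α⁻¹ + 1) / p), hn.eventually_ge_atTop (α⁻¹ / (1 - p)),
    hn.eventually_ge_atTop 1] with n hna hnc hn1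
  -- the dominant term is the one at `j = ⌊p n⌋`
  set J := ⌊p * n⌋₊
  have hJle : (J : ℝ) ≤ p * n := Nat.floor_le (by positivity)
  have hJgt : p * n - 1 < J := Nat.sub_one_lt_floor _
  have hJn : J ≤ n := by
    exact_mod_cast hJle.trans (mul_le_of_le_one_left (Nat.cast_nonneg n) hp1.le)
  have ha : 1 ≤ α * J := by
    have := (div_le_iff₀' hp0).1 hna
    rw [← inv_le_iff_one_le_mul₀' hα]; linarith
  have hc : 1 ≤ α * n - α * J := by
    have := (div_le_iff₀' (sub_pos.2 hp1)).1 hnc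
    rw [← mul_sub, ← inv_le_iff_one_le_mul₀' hα]; linarith
  have hpen : (α * J * b - (α * n - α * J) * y) ^ 2 / (α * n * y * b)
      ≤ α * (y + b) ^ 2 / (y * b) := by
    have hdiff : α * J * b - (α * n - α * J) * y = α * (y + b) * (J - p * n) := by
      rw [hp]; field_simp; ring
    have hd : (J - p * n) ^ 2 ≤ (n : ℝ) := by nlinarith
    rw [hdiff, div_le_div_iff₀ (by positivity) (by positivity)]
    calc (α * (y + b) * (J - p * n)) ^ 2 * (y * b)
        = (α ^ 2 * (y + b) ^ 2 * y * b) * (J - p * n) ^ 2 := by ring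
      _ ≤ (α ^ 2 * (y + b) ^ 2 * y * b) * n := by gcongr
      _ = α * (y + b) ^ 2 * (α * n * y * b) := by ring
  have hlogJ : log (α * J) ≤ log (α * n) := log_le_log (by linarith) (by nlinarith)
  have hlognJ : log (α * n - α * J) ≤ log (α * n) := log_le_log (by linarith) (by nlinarith)
  have hsingle : log (fracBinomTerm y b (α * n) (α * J)) ≤ log (fracBinomSum α y b n) :=
    log_le_log (fracBinomTerm_pos hy hb (by linarith) (by linarith))
      (Finset.single_le_sum (fun _ hj => (fracBinomTerm_mem_range_pos hα hy hb hj).le)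
        (Finset.mem_range.2 (Nat.lt_succ_of_le hJn)))
  linarith [le_log_fracBinomTerm hy hb ha hc]

theorem tendsto_log_fracBinomSum_div (hα : 0 < α) (hy : 0 < y) (hb : 0 < b) :
    Tendsto (fun n : ℕ => log (fracBinomSum α y b n) / n) atTop (nhds (α * log (y + b))) := by
  obtain ⟨C, hC⟩ := exists_le_log_fracBinomSum hα hy hb
  set M := |C| + 3 + log 2 + 2 * |log α| with hM
  have hlim : Tendsto (fun n : ℕ => (M + 2 * log n) / n) atTop (nhds 0) := by
    have h := (tendsto_const_div_atTop_nhds_zero_nat M).add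
      (((isLittleO_log_id_atTop.tendsto_div_nhds_zero).comp
        tendsto_natCast_atTop_atTop).const_mul 2)
    simpa [add_div, mul_div_assoc] using h
  refine tendsto_sub_nhds_zero_iff.1 (squeeze_zero_norm' ?_ hlim)
  filter_upwards [hC, eventually_ge_atTop 1,
    (tendsto_natCast_atTop_atTop.const_mul_atTop hα).eventually_ge_atTop 1]
    with n hlow hn1 hαn
  have hn0 : (0 : ℝ) < n := by exact_mod_cast hn1
  have hup := log_fracBinomSum_le hα hy hb hαn
  have hlogαn : log (α * n) = log α + log n := log_mul hα.ne' hn0.ne'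
  have hlogn1 : log (n + 1) ≤ log 2 + log n := by
    rw [← log_mul two_ne_zero hn0.ne']
    exact log_le_log (by positivity) (by linarith [(Nat.one_le_cast (α := ℝ)).2 hn1])
  rw [norm_eq_abs, div_sub' hn0.ne', abs_div, abs_of_pos hn0,
    div_le_div_iff_of_pos_right hn0, abs_le]
  constructor <;> linarith [neg_abs_le (log α), le_abs_self (log α), abs_nonneg C, le_abs_self C,
    log_pos one_lt_two]

end FracBinomSum

lemma sum_exp_mul_fracW {α x : ℝ} (hα : α ≠ 0) (hx : 0 ≤ x) (ξ : ℝ) (n : ℕ) :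
    ∑ j ∈ Finset.range (n + 1), exp (ξ * j) * fracW α x n j
      = fracBinomSum α (x * exp (ξ / α)) (1 - x) n / fracBinomSum α x (1 - x) n := by
  have hZ : fracZ α x n = α * fracBinomSum α x (1 - x) n := by
    simp only [fracZ, fracBinomSum, fracBinomTerm, mul_sub]
  rw [fracBinomSum, Finset.sum_div]
  refine Finset.sum_congr rfl fun j _ => ?_
  rw [fracW, hZ, div_mul_cancel_left₀ hα, fracBinomTerm, mul_rpow hx (exp_pos _).le, ← exp_mul,
    show ξ / α * (α * j) = ξ * j by field_simp, mul_sub]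
  ring

/-- Limit of the scaled logarithmic moment generating function of `S_{α,x}^{(n)}/n`:
`(1/n) log E[e^{ξ S}] → α log(1 − x + x e^{ξ/α})`. -/
theorem fracBinom_lmgf_limit (α x : ℝ) (hα : 0 < α) (hx : x ∈ Set.Ioo (0 : ℝ) 1) (ξ : ℝ) :
    Filter.Tendsto (fun n : ℕ =>
        Real.log (∑ j ∈ Finset.range (n + 1), Real.exp (ξ * j) * fracW α x n j) / (n : ℝ))
      Filter.atTop (nhds (α * Real.log (1 - x + x * Real.exp (ξ / α)))) := by
  obtain ⟨hx0, hx1⟩ := hx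
  have hy : 0 < x * exp (ξ / α) := by positivity
  have hb : 0 < 1 - x := by linarith
  have h := (tendsto_log_fracBinomSum_div hα hy hb).sub (tendsto_log_fracBinomSum_div hα hx0 hb)
  rw [add_sub_cancel, log_one, mul_zero, sub_zero, add_comm] at h
  refine h.congr fun n => ?_
  rw [sum_exp_mul_fracW hα.ne' hx0.le, log_div (fracBinomSum_pos hα hy hb n).ne'
    (fracBinomSum_pos hα hx0 hb n).ne', sub_div]
end
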